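/- For every κ > 0 one has α(κ) − 1 + κ·α'(κ) < 0; that is, the function κ ↦ κ(α(κ) − 1) is strictly decreasing on (0,∞). -/

import Mathlib

/-- The Whitham dispersion symbol `α(ξ) = √(tanh ξ / ξ)` for `ξ ≠ 0`, with `α(0) = 1`. -/
noncomputable def whithamSymbol (ξ : ℝ) : ℝ :=
  if ξ = 0 then 1 else Real.sqrt (Real.tanh ξ / ξ)

-- tanh x < x for x > 0
lemma tanh_lt_self' {x : ℝ} (hx : 0 < x) : Real.tanh x < x := by
  rw [Real.tanh_eq_sinh_div_cosh, div_lt_iff₀ (Real.cosh_pos x)]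
  have hmono : StrictMonoOn (fun y => y * Real.cosh y - Real.sinh y) (Set.Ici 0) := by
    apply strictMonoOn_of_deriv_pos (convex_Ici 0)
    · exact ((continuous_id.mul Real.continuous_cosh).sub Real.continuous_sinh).continuousOn
    · intro y hy
      rw [interior_Ici, Set.mem_Ioi] at hy
      have h : HasDerivAt (fun y => y * Real.cosh y - Real.sinh y)
          (1 * Real.cosh y + y * Real.sinh y - Real.cosh y) y :=
        ((hasDerivAt_id y).mul (Real.hasDerivAt_cosh y)).sub (Real.hasDerivAt_sinh y)
      rw [h.deriv]
      have := Real.sinh_pos_iff.2 hy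
      nlinarith
  have h0 : (0:ℝ) * Real.cosh 0 - Real.sinh 0 < x * Real.cosh x - Real.sinh x :=
    hmono (by simp) (Set.mem_Ici.2 hx.le) hx
  simp at h0
  linarith

set_option maxHeartbeats 1000000

theorem whithamSymbol_kappa_mul_sub_one_strictAnti (κ : ℝ) (hκ : 0 < κ) :
    whithamSymbol κ - 1 + κ * deriv whithamSymbol κ < 0 := by
  set t := Real.tanh κ with htdef
  set y := Real.exp κ with hydef
  have hy : 1 < y := by
    have := Real.add_one_lt_exp hκ.ne'
    simpa [hydef] using by linarith
  have hy0 : 0 < y := by linarith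
  have ht : t = (y^2 - 1) / (y^2 + 1) := by
    rw [htdef, Real.tanh_eq_sinh_div_cosh, Real.sinh_eq, Real.cosh_eq, Real.exp_neg, ← hydef]
    field_simp
  have hy2 : (0:ℝ) < y^2 + 1 := by positivity
  have tpos : 0 < t := by
    rw [ht]; apply div_pos (by nlinarith) hy2
  have tlt1 : t < 1 := by
    rw [ht, div_lt_one hy2]; linarith
  have tltκ : t < κ := tanh_lt_self' hκ
  -- key inequality: κ (1-t)^2 < t
  have e4 : 4*κ + 1 < y^4 := by
    have := Real.add_one_lt_exp (show (4:ℝ)*κ ≠ 0 by positivity)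
    have h4 : Real.exp (4*κ) = y^4 := by
      rw [show (4:ℝ)*κ = κ+κ+κ+κ by ring, Real.exp_add, Real.exp_add, Real.exp_add, ← hydef]
      ring
    linarith [h4 ▸ this]
  have key : κ * (1 - t)^2 < t := by
    have h1t : (1 - t) * (y^2 + 1) = 2 := by rw [ht]; field_simp; ring
    have hrt : t * (y^2 + 1)^2 = y^4 - 1 := by rw [ht]; field_simp; ring
    have hgoal : κ * (1 - t)^2 * (y^2+1)^2 < t * (y^2+1)^2 := by
      have hl : κ * (1 - t)^2 * (y^2+1)^2 = κ * ((1-t)*(y^2+1))^2 := by ring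
      rw [hl, h1t, hrt]; nlinarith
    exact lt_of_mul_lt_mul_right hgoal (by positivity : (0:ℝ) ≤ (y^2+1)^2)
  -- derivative of tanh
  have htanh : HasDerivAt Real.tanh (1 - t^2) κ := by
    have h := (Real.hasDerivAt_sinh κ).div (Real.hasDerivAt_cosh κ) (Real.cosh_pos κ).ne'
    have heq : (Real.sinh / Real.cosh) = Real.tanh :=
      funext fun x => (Real.tanh_eq_sinh_div_cosh x).symm
    rw [heq] at h
    refine h.congr_deriv ?_
    rw [htdef, Real.tanh_eq_sinh_div_cosh]
    have hc := Real.cosh_pos κ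
    have hid := Real.cosh_sq_sub_sinh_sq κ
    field_simp
  have hdiv : HasDerivAt (fun x => Real.tanh x / x) (((1-t^2)*κ - t*1)/κ^2) κ :=
    htanh.div (hasDerivAt_id κ) hκ.ne'
  have hfκ : 0 < t / κ := div_pos tpos hκ
  have hsq : HasDerivAt (fun x => Real.sqrt (Real.tanh x / x))
      ((((1-t^2)*κ - t*1)/κ^2) / (2 * Real.sqrt (t/κ))) κ := hdiv.sqrt hfκ.ne'
  have hev : (fun x => Real.sqrt (Real.tanh x / x)) =ᶠ[nhds κ] whithamSymbol := by
    filter_upwards [eventually_ne_nhds hκ.ne'] with x hx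
    simp [whithamSymbol, hx]
  have hW : HasDerivAt whithamSymbol ((((1-t^2)*κ - t*1)/κ^2) / (2 * Real.sqrt (t/κ))) κ :=
    hsq.congr_of_eventuallyEq hev.symm
  rw [hW.deriv, show whithamSymbol κ = Real.sqrt (t/κ) by simp [whithamSymbol, hκ.ne', htdef]]
  -- set up square roots
  set p := Real.sqrt κ with hpdef
  set q := Real.sqrt t with hqdef
  have hp : 0 < p := Real.sqrt_pos.2 hκ
  have hq : 0 < q := Real.sqrt_pos.2 tpos
  have hp2 : p^2 = κ := Real.sq_sqrt hκ.le
  have hq2 : q^2 = t := Real.sq_sqrt tpos.le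
  have hqp : q < p := Real.sqrt_lt_sqrt tpos.le tltκ
  have ha : Real.sqrt (t/κ) = q / p := Real.sqrt_div tpos.le κ
  have hq1 : q < 1 := by nlinarith
  have hpq : p * (1 - q^2) < q := by
    have key' : p^2 * (1 - q^2)^2 < q^2 := by rw [hp2, hq2]; exact key
    have h : (p * (1 - q^2))^2 < q^2 := by nlinarith [key']
    exact lt_of_pow_lt_pow_left₀ 2 hq.le h
  have hA : 0 < p*q^2 - (p - q) := by nlinarith
  have hB : 0 < p*q^2 + (p - q) := by nlinarith
  have h2 : (p - q)^2 < (p*q^2)^2 := by nlinarith [mul_pos hA hB]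
  rw [ha, ← hp2, ← hq2]
  have hp0 : p ≠ 0 := hp.ne'
  have hq0 : q ≠ 0 := hq.ne'
  clear_value t y p q
  have hE : q/p - 1 + p^2*(((1-(q^2)^2)*p^2 - q^2*1)/(p^2)^2/(2*(q/p)))
      = ((p-q)^2 - (p*q^2)^2)/(2*p*q) := by
    field_simp
    ring
  rw [hE]
  exact div_neg_of_neg_of_pos (by linarith [h2]) (by positivity)
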